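/- Let m > 0 and ρ > 0, and let (s, η̂) ∈ ℝ² satisfy the mass-shell constraint (s−1)² + η̂² = 1 − ρ²m². Then the three quantities (η̂² + (s−1)²)·ρ, (2−s)·(η̂² + s(s−1)), and (η̂² + s² − s − 1)·η̂ all vanish simultaneously if and only if (ρ, s, η̂) = (1/m, 1, 0). -/
import Mathlib


/-- On the mass shell `(s−1)² + η̂² = 1 − ρ²m²` with `ρ > 0`, the three components of the
rescaled Hamiltonian vector field over the corner `nFf ∩ Ff` vanish simultaneously iff
`(ρ, s, η̂) = (1/m, 1, 0)`, identifying the radial set `𝓡⁺₊`. -/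
theorem radial_set_R (m ρ s η : ℝ) (hm : 0 < m) (hρ : 0 < ρ)
    (hchar : (s - 1) ^ 2 + η ^ 2 = 1 - ρ ^ 2 * m ^ 2) :
    ((η ^ 2 + (s - 1) ^ 2) * ρ = 0 ∧
     (2 - s) * (η ^ 2 + s * (s - 1)) = 0 ∧
     (η ^ 2 + s ^ 2 - s - 1) * η = 0) ↔ (ρ = 1 / m ∧ s = 1 ∧ η = 0) := by
  constructor
  · rintro ⟨h1, -, -⟩
    have h0 : η ^ 2 + (s - 1) ^ 2 = 0 := by
      rcases mul_eq_zero.mp h1 with h | h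
      · exact h
      · exact absurd h hρ.ne'
    have hs : s = 1 := by nlinarith [sq_nonneg η, sq_nonneg (s - 1)]
    have hη : η = 0 := by nlinarith [sq_nonneg η, sq_nonneg (s - 1)]
    refine ⟨?_, hs, hη⟩
    have : ρ ^ 2 * m ^ 2 = 1 := by
      rw [hs, hη] at hchar; linarith
    have hρm : ρ * m = 1 := by nlinarith [mul_pos hρ hm]
    field_simp
    linarith
  · rintro ⟨hρ1, hs, hη⟩
    subst hs hη
    norm_num
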